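/- arXiv:2110.05317 — 3 statements merged into one kernel-verified Lean document; each statement's English description precedes it below -/
import Mathlib

section
/- For every ε_0 with 0 < ε_0 < δ_0, the process {z_t} converges to zero in mean square at the weighted rate: lim_{t→∞} (t+1)^{δ_0 − ε_0} E(z_t²) = 0. -/
/-!
Write `c t = a1 (t+1)^(-μ)`. The noise `w t` is independent of the history
`(z0, r2, w 0, …, w (t-1))`, which determines `z t` and `r2 t`; so the cross term vanishes and
convexity of the square gives `E z_{t+1}² ≤ (1 - c t) E z_t² + K c t (t+1)^(-δ0)`.
For `U t = (t+1)^δ0 E z_t²`, the growth factor `((t+2)/(t+1))^δ0 ≤ 1 + δ0/(t+1)` is eventually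
below `1 + c t / 2` because `μ < 1`, hence eventually `U (t+1) ≤ max (U t) (3K)`. So `U` is
eventually bounded, and `(t+1)^(δ0-ε0) E z_t² = (t+1)^(-ε0) U t → 0`.
-/

open MeasureTheory ProbabilityTheory Filter

open Set Topology

open scoped ENNReal

lemma tendsto_natCast_add_one_rpow_neg {p : ℝ} (hp : 0 < p) :
    Tendsto (fun t : ℕ => ((t : ℝ) + 1) ^ (-p)) atTop (𝓝 0) :=
  (tendsto_rpow_neg_atTop hp).comp
    (tendsto_atTop_add_const_right _ 1 tendsto_natCast_atTop_atTop)

lemma add_one_rpow_le {s p : ℝ} (hs : 0 < s) (hp0 : 0 ≤ p) (hp1 : p ≤ 1) :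
    (s + 1) ^ p ≤ s ^ p * (1 + p / s) := by
  have h : s + 1 = s * (1 + s⁻¹) := by field_simp
  rw [h, Real.mul_rpow hs.le (by positivity), div_eq_mul_inv]
  gcongr
  exact rpow_one_add_le_one_add_mul_self (by linarith [inv_pos.2 hs]) hp0 hp1

lemma le_max_of_le_one_sub_mul_add {x y M q : ℝ} (hq0 : 0 ≤ q) (hq1 : q ≤ 1)
    (h : y ≤ (1 - q) * x + q * M) : y ≤ max x M := by
  nlinarith [le_max_left x M, le_max_right x M]

lemma rpow_mul_le_max_of_le_one_sub_mul_add {s q K p v v' : ℝ} (hs : 0 < s) (hK : 0 ≤ K)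
    (hp0 : 0 ≤ p) (hp1 : p ≤ 1) (hv : 0 ≤ v) (hq1 : q ≤ 1) (hq : p / s ≤ q / 2)
    (h : v' ≤ (1 - q) * v + K * q * s ^ (-p)) :
    (s + 1) ^ p * v' ≤ max (s ^ p * v) (3 * K) := by
  have hq0 : 0 ≤ q := by linarith [div_nonneg hp0 hs.le]
  have hρ : (s + 1) ^ p ≤ s ^ p * (1 + q / 2) :=
    (add_one_rpow_le hs hp0 hp1).trans (by gcongr)
  refine le_max_of_le_one_sub_mul_add (q := q / 2) (by linarith) (by linarith) ?_
  calc (s + 1) ^ p * v' ≤ (s + 1) ^ p * ((1 - q) * v + K * q * s ^ (-p)) := by gcongr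
    _ ≤ s ^ p * (1 + q / 2) * ((1 - q) * v + K * q * s ^ (-p)) := by gcongr
    _ = (1 + q / 2) * (1 - q) * (s ^ p * v) + (1 + q / 2) * K * q := by
      rw [Real.rpow_neg hs.le]
      field_simp
    _ ≤ (1 - q / 2) * (s ^ p * v) + q / 2 * (3 * K) := by
      have : 0 ≤ s ^ p * v := by positivity
      nlinarith [mul_nonneg (mul_nonneg hq0 hq0) this, mul_nonneg hK hq0]

lemma exists_eventually_rpow_mul_le {V q : ℕ → ℝ} {K p : ℝ} (hK : 0 ≤ K) (hp0 : 0 ≤ p)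
    (hp1 : p ≤ 1) (hV : ∀ t, 0 ≤ V t) (hq1 : ∀ t, q t ≤ 1)
    (hq : ∀ᶠ t : ℕ in atTop, p / ((t : ℝ) + 1) ≤ q t / 2)
    (hrec : ∀ t : ℕ, V (t + 1) ≤ (1 - q t) * V t + K * q t * ((t : ℝ) + 1) ^ (-p)) :
    ∃ B, ∀ᶠ t : ℕ in atTop, ((t : ℝ) + 1) ^ p * V t ≤ B := by
  obtain ⟨t₀, ht₀⟩ := eventually_atTop.1 hq
  refine ⟨max (((t₀ : ℝ) + 1) ^ p * V t₀) (3 * K), eventually_atTop.2 ⟨t₀, fun t ht => ?_⟩⟩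
  induction t, ht using Nat.le_induction with
  | base => exact le_max_left _ _
  | succ t ht ih =>
    have hstep := rpow_mul_le_max_of_le_one_sub_mul_add (by positivity) hK hp0 hp1 (hV t)
      (hq1 t) (ht₀ t ht) (hrec t)
    push_cast
    exact hstep.trans (max_le ih (le_max_right _ _))

lemma eventually_div_le_rpow_neg {a μ : ℝ} (ha : 0 < a) (hμ : μ < 1) (p : ℝ) :
    ∀ᶠ t : ℕ in atTop, p / ((t : ℝ) + 1) ≤ a * ((t : ℝ) + 1) ^ (-μ) / 2 := by
  have h := ((tendsto_natCast_add_one_rpow_neg (sub_pos.2 hμ)).const_mul p).eventually_le_const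
    (show p * 0 < a / 2 by linarith)
  filter_upwards [h] with t ht
  have hs : (0 : ℝ) < (t : ℝ) + 1 := by positivity
  calc p / ((t : ℝ) + 1) = p * ((t : ℝ) + 1) ^ (-(1 - μ)) * ((t : ℝ) + 1) ^ (-μ) := by
        rw [mul_assoc, ← Real.rpow_add hs, show -(1 - μ) + -μ = -1 by ring, Real.rpow_neg_one,
          div_eq_mul_inv]
    _ ≤ a / 2 * ((t : ℝ) + 1) ^ (-μ) := by gcongr
    _ = _ := by ring

lemma sq_rpow_neg_add_le {s a1 a2 σ2 δ μ p : ℝ} (hs : 1 ≤ s) (hδ : 0 ≤ δ) (hpδ : p ≤ δ)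
    (hpμ : p ≤ μ) (ha1 : 0 ≤ a1) (hσ2 : 0 ≤ σ2) :
    (a2 * s ^ (-δ)) ^ 2 + a1 * s ^ (-μ) * σ2 ≤ (a2 ^ 2 + a1 * σ2) * s ^ (-p) := by
  have h0 : 0 ≤ s ^ (-δ) := Real.rpow_nonneg (by linarith) _
  have h1 : s ^ (-δ) ≤ 1 := Real.rpow_le_one_of_one_le_of_nonpos hs (by linarith)
  have h2 : s ^ (-δ) ≤ s ^ (-p) := Real.rpow_le_rpow_of_exponent_le hs (by linarith)
  have h3 : s ^ (-μ) ≤ s ^ (-p) := Real.rpow_le_rpow_of_exponent_le hs (by linarith)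
  have h4 : (s ^ (-δ)) ^ 2 ≤ s ^ (-p) := by nlinarith
  calc (a2 * s ^ (-δ)) ^ 2 + a1 * s ^ (-μ) * σ2
      = a2 ^ 2 * (s ^ (-δ)) ^ 2 + a1 * σ2 * s ^ (-μ) := by ring
    _ ≤ a2 ^ 2 * s ^ (-p) + a1 * σ2 * s ^ (-p) := by gcongr
    _ = _ := by ring

lemma tendsto_rpow_sub_mul_of_eventually_le {V : ℕ → ℝ} {p ε B : ℝ} (hε : 0 < ε)
    (hV : ∀ t, 0 ≤ V t) (hB : ∀ᶠ t : ℕ in atTop, ((t : ℝ) + 1) ^ p * V t ≤ B) :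
    Tendsto (fun t : ℕ => ((t : ℝ) + 1) ^ (p - ε) * V t) atTop (𝓝 0) := by
  have hbdd : IsBoundedUnder (· ≤ ·) atTop fun t : ℕ => ‖((t : ℝ) + 1) ^ p * V t‖ :=
    isBoundedUnder_of_eventually_le <| by
      filter_upwards [hB] with t ht
      rwa [Real.norm_of_nonneg (mul_nonneg (by positivity) (hV t))]
  refine ((tendsto_natCast_add_one_rpow_neg hε).zero_mul_isBoundedUnder_le hbdd).congr fun t => ?_
  rw [← mul_assoc, ← Real.rpow_add (by positivity), neg_add_eq_sub]

lemma memLp_of_abs_le {Ω : Type*} [MeasurableSpace Ω] {P : Measure Ω} [IsFiniteMeasure P]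
    {R : Ω → ℝ} {b : ℝ} {p : ℝ≥0∞} (hR : AEStronglyMeasurable R P) (hb : ∀ᵐ ω ∂P, |R ω| ≤ b) :
    MemLp R p P :=
  MemLp.of_bound hR b (by filter_upwards [hb] with ω h; rwa [Real.norm_eq_abs])

open MeasurableSpace in
lemma indep_sup_left_of_indep_sup_right {Ω : Type*} {m₁ m₂ m₃ mΩ : MeasurableSpace Ω}
    {μ : Measure Ω} [IsZeroOrProbabilityMeasure μ] (h₁ : m₁ ≤ mΩ) (h₂ : m₂ ≤ mΩ)
    (h₃ : m₃ ≤ mΩ) (h₁₂₃ : Indep m₁ (m₂ ⊔ m₃) μ) (h₂₃ : Indep m₂ m₃ μ) :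
    Indep (m₁ ⊔ m₂) m₃ μ := by
  set p := image2 (· ∩ ·) {s | MeasurableSet[m₁] s} {t | MeasurableSet[m₂] t}
  have hp : IsPiSystem p := by
    rintro _ ⟨s, hs, t, ht, rfl⟩ _ ⟨s', hs', t', ht', rfl⟩ -
    exact ⟨s ∩ s', hs.inter hs', t ∩ t', ht.inter ht', inter_inter_inter_comm s s' t t'⟩
  have hgen : m₁ ⊔ m₂ = generateFrom p := by
    refine le_antisymm (sup_le (fun s hs => ?_) (fun t ht => ?_)) (generateFrom_le ?_)
    · exact measurableSet_generateFrom ⟨s, hs, univ, MeasurableSet.univ, inter_univ s⟩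
    · exact measurableSet_generateFrom ⟨univ, MeasurableSet.univ, t, ht, univ_inter t⟩
    · rintro _ ⟨s, hs, t, ht, rfl⟩
      exact (le_sup_left (a := m₁) (b := m₂) s hs).inter (le_sup_right (a := m₁) (b := m₂) t ht)
  refine IndepSets.indep (sup_le h₁ h₂) h₃ hp (@isPiSystem_measurableSet Ω m₃) hgen
    (@generateFrom_measurableSet Ω m₃).symm ((IndepSets_iff _ _ _).2 ?_)
  rintro _ u ⟨s, hs, t, ht, rfl⟩ hu
  have hindep₁₂₃ := (Indep_iff _ _ _).1 h₁₂₃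
  calc μ (s ∩ t ∩ u) = μ s * μ (t ∩ u) := by
        rw [inter_assoc]
        exact hindep₁₂₃ s _ hs ((le_sup_left (a := m₂) (b := m₃) t ht).inter
          (le_sup_right (a := m₂) (b := m₃) u hu))
    _ = μ s * μ t * μ u := by rw [(Indep_iff _ _ _).1 h₂₃ t u ht hu, mul_assoc]
    _ = μ (s ∩ t) * μ u := by
        rw [hindep₁₂₃ s t hs (le_sup_left (a := m₂) (b := m₃) t ht)]

lemma ProbabilityTheory.IndepFun.memLp_two_right_of_add {Ω : Type*} [MeasurableSpace Ω]
    {P : Measure Ω} [IsProbabilityMeasure P] {X Y : Ω → ℝ} (hXY : IndepFun X Y P)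
    (hX : Measurable X) (hY : Measurable Y) (h : MemLp (fun ω => X ω + Y ω) 2 P) : MemLp Y 2 P := by
  have hprod : Integrable (fun q : ℝ × ℝ => (q.1 + q.2) ^ 2) ((P.map X).prod (P.map Y)) := by
    rw [← (indepFun_iff_map_prod_eq_prod_map_map hX.aemeasurable hY.aemeasurable).1 hXY,
      integrable_map_measure (by fun_prop) (by fun_prop)]
    exact h.integrable_sq
  have : IsProbabilityMeasure (P.map X) := Measure.isProbabilityMeasure_map hX.aemeasurable
  -- Fubini: `y ↦ (x + y)²` is integrable for the law of `Y`, for almost every `x`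
  obtain ⟨x, hx⟩ := hprod.prod_right_ae.exists
  have hshift : MemLp (fun y => x + y) 2 (P.map Y) :=
    (memLp_two_iff_integrable_sq (by fun_prop)).2 hx
  have hid : MemLp id 2 (P.map Y) := by
    convert hshift.sub (memLp_const x) using 1
    ext y
    simp
  exact (memLp_map_measure_iff hid.aestronglyMeasurable hY.aemeasurable).1 hid

section RelaxationStep

variable {Ω : Type*} [MeasurableSpace Ω] {P : Measure Ω} [IsProbabilityMeasure P]
  {Z R W : Ω → ℝ} {c : ℝ}

lemma integral_sq_relaxation_le {b σ2 : ℝ} (hc0 : 0 ≤ c) (hc1 : c ≤ 1) (hZ : MemLp Z 2 P)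
    (hRm : AEStronglyMeasurable R P) (hR : ∀ᵐ ω ∂P, |R ω| ≤ b) (hW : MemLp W 2 P)
    (hind : IndepFun (fun ω => (1 - c) * Z ω + c * R ω) W P)
    (hmean : ∫ ω, W ω ∂P = 0) (hvar : ∫ ω, W ω ^ 2 ∂P = σ2) :
    ∫ ω, ((1 - c) * Z ω + c * (R ω + W ω)) ^ 2 ∂P
      ≤ (1 - c) * ∫ ω, Z ω ^ 2 ∂P + c * (b ^ 2 + c * σ2) := by
  set Y := fun ω => (1 - c) * Z ω + c * R ω
  have hY : MemLp Y 2 P := (hZ.const_mul _).add ((memLp_of_abs_le hRm hR).const_mul _)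
  have hcross : ∫ ω, Y ω * W ω ∂P = 0 := by
    simpa [hmean] using hind.integral_mul_eq_mul_integral hY.1 hW.1
  -- convexity of the square: the defect is `c (1 - c) (Z - R)²`
  have hconv : ∀ᵐ ω ∂P, Y ω ^ 2 ≤ (1 - c) * Z ω ^ 2 + c * b ^ 2 := by
    filter_upwards [hR] with ω hω
    have : R ω ^ 2 ≤ b ^ 2 := sq_le_sq' (abs_le.1 hω).1 (abs_le.1 hω).2
    nlinarith [mul_nonneg (mul_nonneg hc0 (sub_nonneg.2 hc1)) (sq_nonneg (Z ω - R ω))]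
  have hYW : Integrable (fun ω => Y ω * W ω) P := hY.integrable_mul hW
  have hexpand : ∫ ω, ((1 - c) * Z ω + c * (R ω + W ω)) ^ 2 ∂P
      = ∫ ω, Y ω ^ 2 ∂P + 2 * c * ∫ ω, Y ω * W ω ∂P + c ^ 2 * ∫ ω, W ω ^ 2 ∂P := by
    rw [← integral_const_mul, ← integral_const_mul, ← integral_add hY.integrable_sq
      (hYW.const_mul _), ← integral_add (f := fun ω => Y ω ^ 2 + 2 * c * (Y ω * W ω))
      (hY.integrable_sq.add (hYW.const_mul _)) (hW.integrable_sq.const_mul _)]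
    congr 1 with ω
    ring
  have hY2 : ∫ ω, Y ω ^ 2 ∂P ≤ (1 - c) * ∫ ω, Z ω ^ 2 ∂P + c * b ^ 2 := by
    calc ∫ ω, Y ω ^ 2 ∂P ≤ ∫ ω, ((1 - c) * Z ω ^ 2 + c * b ^ 2) ∂P :=
          integral_mono_ae hY.integrable_sq
            ((hZ.integrable_sq.const_mul _).add (integrable_const _)) hconv
      _ = _ := by
          rw [integral_add (hZ.integrable_sq.const_mul _) (integrable_const _),
            integral_const_mul, integral_const, probReal_univ, one_smul]
  rw [hexpand, hcross, hvar]
  linarith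

lemma integral_sq_relaxation_eq_zero (hc : c ≠ 0) (hZ : Measurable Z) (hR : Measurable R)
    (hW : Measurable W) (hind : IndepFun (fun ω => (1 - c) * Z ω + c * R ω) W P)
    (hW2 : ¬MemLp W 2 P) : ∫ ω, ((1 - c) * Z ω + c * (R ω + W ω)) ^ 2 ∂P = 0 := by
  refine integral_undef fun h => hW2 ?_
  have hsum : MemLp (fun ω => ((1 - c) * Z ω + c * R ω) + c * W ω) 2 P := by
    refine (memLp_two_iff_integrable_sq (by fun_prop)).2 ?_
    convert h using 3
    ring
  have hind' : IndepFun (fun ω => (1 - c) * Z ω + c * R ω) (fun ω => c * W ω) P :=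
    hind.comp measurable_id (measurable_const_mul c)
  convert (hind'.memLp_two_right_of_add (by fun_prop) (by fun_prop) hsum).const_mul c⁻¹ using 1
  ext ω
  field_simp

end RelaxationStep

section History

variable {Ω : Type*} {z w r : ℕ → Ω → ℝ} {c : ℕ → ℝ}

abbrev history (z₀ : Ω → ℝ) (r w : ℕ → Ω → ℝ) (t : ℕ) : MeasurableSpace Ω :=
  MeasurableSpace.comap (fun ω => (z₀ ω, fun s => r s ω)) inferInstance
    ⊔ ⨆ s ∈ Iio t, MeasurableSpace.comap (w s) inferInstance

lemma history_mono {z₀ : Ω → ℝ} : Monotone (history z₀ r w) := fun _ _ h =>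
  sup_le_sup_left (biSup_mono fun _ hs => lt_of_lt_of_le hs h) _

lemma measurable_history_initial {z₀ : Ω → ℝ} (t : ℕ) :
    Measurable[history z₀ r w t] (fun ω => (z₀ ω, fun s => r s ω)) :=
  (comap_measurable _).mono le_sup_left le_rfl

lemma measurable_history_noise {z₀ : Ω → ℝ} {s t : ℕ} (hst : s < t) :
    Measurable[history z₀ r w t] (w s) :=
  (comap_measurable _).mono ((le_iSup₂ (f := fun s (_ : s ∈ Iio t) =>
    MeasurableSpace.comap (w s) inferInstance) s hst).trans le_sup_right) le_rfl

lemma history_le [MeasurableSpace Ω] {z₀ : Ω → ℝ} (hz₀ : Measurable z₀)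
    (hr : ∀ t, Measurable (r t)) (hw : ∀ t, Measurable (w t)) (t : ℕ) :
    history z₀ r w t ≤ ‹MeasurableSpace Ω› :=
  sup_le (hz₀.prodMk (measurable_pi_lambda _ hr)).comap_le (iSup₂_le fun s _ => (hw s).comap_le)

lemma measurable_history
    (hz : ∀ t ω, z (t + 1) ω = (1 - c t) * z t ω + c t * (r t ω + w t ω)) (t : ℕ) :
    Measurable[history (z 0) r w t] (z t) := by
  induction t with
  | zero => exact measurable_fst.comp (measurable_history_initial 0)
  | succ t ih =>
    have hr : Measurable[history (z 0) r w (t + 1)] (r t) :=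
      (measurable_pi_apply t).comp (measurable_snd.comp (measurable_history_initial _))
    rw [show z (t + 1) = _ from funext (hz t)]
    exact ((ih.mono (history_mono t.le_succ) le_rfl).const_mul _).add
      ((hr.add (measurable_history_noise t.lt_succ_self)).const_mul _)

lemma indep_history_noise [MeasurableSpace Ω] {P : Measure Ω} [IsProbabilityMeasure P]
    {z₀ : Ω → ℝ} (hz₀ : Measurable z₀) (hr : ∀ t, Measurable (r t))
    (hw : ∀ t, Measurable (w t)) (hwindep : iIndepFun w P)
    (hindep : IndepFun (fun ω => (z₀ ω, fun t => r t ω)) (fun ω t => w t ω) P) (t : ℕ) :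
    Indep (history z₀ r w t) (MeasurableSpace.comap (w t) inferInstance) P := by
  have hwW : ∀ s, MeasurableSpace.comap (w s) inferInstance
      ≤ MeasurableSpace.comap (fun ω t => w t ω) inferInstance := fun s =>
    have : Measurable[MeasurableSpace.comap (fun ω t => w t ω) inferInstance] (w s) :=
      (measurable_pi_apply s).comp (comap_measurable (fun ω t => w t ω))
    this.comap_le
  refine indep_sup_left_of_indep_sup_right (hz₀.prodMk (measurable_pi_lambda _ hr)).comap_le
    (iSup₂_le fun s _ => (hw s).comap_le) (hw t).comap_le ?_ ?_
  · exact indep_of_indep_of_le_right ((IndepFun_iff_Indep _ _ _).1 hindep)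
      (sup_le (iSup₂_le fun s _ => hwW s) (hwW t))
  · simpa using indep_iSup_of_disjoint (fun s => (hw s).comap_le) hwindep.iIndep
      (S := Iio t) (T := {t}) (by simp)

lemma indepFun_drift_noise [MeasurableSpace Ω] {P : Measure Ω} [IsProbabilityMeasure P]
    (hr : ∀ t, Measurable (r t)) (hw : ∀ t, Measurable (w t)) (hwindep : iIndepFun w P)
    (hz₀ : Measurable (z 0))
    (hindep : IndepFun (fun ω => (z 0 ω, fun t => r t ω)) (fun ω t => w t ω) P)
    (hz : ∀ t ω, z (t + 1) ω = (1 - c t) * z t ω + c t * (r t ω + w t ω)) (t : ℕ) :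
    IndepFun (fun ω => (1 - c t) * z t ω + c t * r t ω) (w t) P := by
  have hrt : Measurable[history (z 0) r w t] (r t) :=
    (measurable_pi_apply t).comp (measurable_snd.comp (measurable_history_initial _))
  exact (IndepFun_iff_Indep _ _ _).2 <| indep_of_indep_of_le_left
    (indep_history_noise hz₀ hr hw hwindep hindep t)
    (((measurable_history hz t).const_mul _).add (hrt.const_mul _)).comap_le

lemma memLp_two_of_recursion [MeasurableSpace Ω] {P : Measure Ω} (hz₀ : MemLp (z 0) 2 P)
    (hr : ∀ t, MemLp (r t) 2 P) (hw : ∀ t, MemLp (w t) 2 P)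
    (hz : ∀ t ω, z (t + 1) ω = (1 - c t) * z t ω + c t * (r t ω + w t ω)) (t : ℕ) :
    MemLp (z t) 2 P := by
  induction t with
  | zero => exact hz₀
  | succ t ih =>
    rw [show z (t + 1) = _ from funext (hz t)]
    exact (ih.const_mul _).add (((hr t).add (hw t)).const_mul _)

end History

theorem stmt_6_general {Ω : Type} [MeasurableSpace Ω] (P : Measure Ω) [IsProbabilityMeasure P]
    -- i.i.d. noise, mean zero, variance σ² < ∞
    (w : ℕ → Ω → ℝ) (hwmeas : ∀ t, Measurable (w t))
    (hwiid : ∀ t, IdentDistrib (w t) (w 0) P P)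
    (hwindep : iIndepFun w P)
    (σ2 : ℝ) (hwmean : ∀ t, ∫ ω, w t ω ∂P = 0)
    (hwvar : ∀ t, ∫ ω, (w t ω) ^ 2 ∂P = σ2)
    -- square-integrable initial condition
    (z0 : Ω → ℝ) (hz0meas : Measurable z0)
    (hz0L2 : Integrable (fun ω => (z0 ω) ^ 2) P)
    -- a.s. bounded perturbations
    (a2 δ : ℝ) (hδ : 0 < δ)
    (r2 : ℕ → Ω → ℝ) (hr2meas : ∀ t, Measurable (r2 t))
    (hr2 : ∀ t, ∀ᵐ ω ∂P, |r2 t ω| ≤ a2 * ((t : ℝ) + 1) ^ (-δ))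
    -- (z0, r2) independent of the noise sequence
    (hindep : IndepFun (fun ω => (z0 ω, fun t => r2 t ω)) (fun ω t => w t ω) P)
    -- deterministic gains
    (a1 μ : ℝ) (ha1 : 0 < a1) (hr1 : ∀ t : ℕ, a1 * ((t : ℝ) + 1) ^ (-μ) ≤ 1)
    -- exponents
    (δ0 : ℝ)
    (hδ0 : (1 ≤ δ ∧ 0 < δ0 ∧ δ0 < 1 ∧ μ = δ0) ∨ (δ < 1 ∧ δ0 = δ ∧ δ ≤ μ ∧ μ < 1))
    -- the process
    (z : ℕ → Ω → ℝ) (hzinit : z 0 = z0)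
    (hz : ∀ t ω, z (t + 1) ω = (1 - a1 * ((t : ℝ) + 1) ^ (-μ)) * z t ω
        + a1 * ((t : ℝ) + 1) ^ (-μ) * (r2 t ω + w t ω)) :
    ∀ ε0 : ℝ, 0 < ε0 → ε0 < δ0 →
      Tendsto (fun t : ℕ => ((t : ℝ) + 1) ^ (δ0 - ε0) * ∫ ω, (z t ω) ^ 2 ∂P)
        atTop (nhds 0) := by
  intro ε0 hε0 hε0δ0
  obtain ⟨hδ0pos, hδ0μ, hμ1, hδ0δ⟩ : 0 < δ0 ∧ δ0 ≤ μ ∧ μ < 1 ∧ δ0 ≤ δ := by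
    rcases hδ0 with ⟨_, _, _, rfl⟩ | ⟨_, rfl, _, _⟩ <;> refine ⟨?_, ?_, ?_, ?_⟩ <;> linarith
  subst hzinit
  have hV t : 0 ≤ ∫ ω, z t ω ^ 2 ∂P := integral_nonneg fun _ => sq_nonneg _
  have hYW := indepFun_drift_noise hr2meas hwmeas hwindep hz0meas hindep hz
  suffices ∃ B, ∀ᶠ t : ℕ in atTop, ((t : ℝ) + 1) ^ δ0 * ∫ ω, z t ω ^ 2 ∂P ≤ B by
    obtain ⟨B, hB⟩ := this
    exact tendsto_rpow_sub_mul_of_eventually_le hε0 hV hB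
  by_cases hw2 : MemLp (w 0) 2 P
  · have hσ2 : 0 ≤ σ2 := hwvar 0 ▸ integral_nonneg fun _ => sq_nonneg _
    have hw2' t : MemLp (w t) 2 P := (hwiid t).symm.memLp_snd hw2
    have hz2 := memLp_two_of_recursion
      ((memLp_two_iff_integrable_sq hz0meas.aestronglyMeasurable).2 hz0L2)
      (fun t => memLp_of_abs_le (hr2meas t).aestronglyMeasurable (hr2 t)) hw2' hz
    refine exists_eventually_rpow_mul_le (K := a2 ^ 2 + a1 * σ2) (by positivity) hδ0pos.le
      (by linarith) hV hr1 (eventually_div_le_rpow_neg ha1 hμ1 δ0) fun t => ?_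
    simp only [hz t]
    calc _ ≤ _ := integral_sq_relaxation_le (by positivity) (hr1 t) (hz2 t)
          (hr2meas t).aestronglyMeasurable (hr2 t) (hw2' t) (hYW t) (hwmean t) (hwvar t)
      _ ≤ _ := by
        have hc : 0 ≤ a1 * ((t : ℝ) + 1) ^ (-μ) := by positivity
        have := sq_rpow_neg_add_le (a2 := a2) (le_add_of_nonneg_left t.cast_nonneg) hδ.le hδ0δ
          hδ0μ ha1.le hσ2
        linarith [mul_le_mul_of_nonneg_left this hc]
  · -- `σ2` is then a junk value, and `z (t + 1)` is not square integrable, so `∫ z (t + 1)² = 0`.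
    refine ⟨0, eventually_atTop.2 ⟨1, fun t ht => ?_⟩⟩
    obtain ⟨t, rfl⟩ := Nat.exists_eq_add_of_le' ht
    have hzmeas := (measurable_history hz t).mono (history_le hz0meas hr2meas hwmeas t) le_rfl
    simp only [hz t]
    rw [integral_sq_relaxation_eq_zero (by positivity) hzmeas (hr2meas t) (hwmeas t) (hYW t)
      fun h => hw2 ((hwiid t).memLp_snd h), mul_zero]

/-- Weighted mean-square convergence: for every `0 < ε0 < δ0`,
`(t+1)^{δ0 − ε0} · E(z_t²) → 0` as `t → ∞`. -/
theorem stmt_6 {Ω : Type} [MeasurableSpace Ω] (P : Measure Ω) [IsProbabilityMeasure P]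
    -- i.i.d. noise, mean zero, variance σ² < ∞
    (w : ℕ → Ω → ℝ) (hwmeas : ∀ t, Measurable (w t))
    (hwiid : ∀ t, IdentDistrib (w t) (w 0) P P)
    (hwindep : iIndepFun w P)
    (σ2 : ℝ) (hwmean : ∀ t, ∫ ω, w t ω ∂P = 0)
    (hwvar : ∀ t, ∫ ω, (w t ω) ^ 2 ∂P = σ2)
    -- square-integrable initial condition
    (z0 : Ω → ℝ) (hz0meas : Measurable z0)
    (hz0L2 : Integrable (fun ω => (z0 ω) ^ 2) P)
    -- a.s. bounded perturbations
    (a2 δ : ℝ) (ha2 : 0 < a2) (hδ : 0 < δ)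
    (r2 : ℕ → Ω → ℝ) (hr2meas : ∀ t, Measurable (r2 t))
    (hr2 : ∀ t, ∀ᵐ ω ∂P, |r2 t ω| ≤ a2 * ((t : ℝ) + 1) ^ (-δ))
    -- (z0, r2) independent of the noise sequence
    (hindep : IndepFun (fun ω => (z0 ω, fun t => r2 t ω)) (fun ω t => w t ω) P)
    -- deterministic gains
    (a1 μ : ℝ) (ha1 : 0 < a1) (hr1 : ∀ t : ℕ, a1 * ((t : ℝ) + 1) ^ (-μ) ≤ 1)
    -- exponents
    (δ0 : ℝ)
    (hδ0 : (1 ≤ δ ∧ 0 < δ0 ∧ δ0 < 1 ∧ μ = δ0) ∨ (δ < 1 ∧ δ0 = δ ∧ δ ≤ μ ∧ μ < 1))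
    -- the process
    (z : ℕ → Ω → ℝ) (hzinit : z 0 = z0)
    (hz : ∀ t ω, z (t + 1) ω = (1 - a1 * ((t : ℝ) + 1) ^ (-μ)) * z t ω
        + a1 * ((t : ℝ) + 1) ^ (-μ) * (r2 t ω + w t ω)) :
    ∀ ε0 : ℝ, 0 < ε0 → ε0 < δ0 →
      Tendsto (fun t : ℕ => ((t : ℝ) + 1) ^ (δ0 - ε0) * ∫ ω, (z t ω) ^ 2 ∂P)
        atTop (nhds 0) :=
  stmt_6_general P w hwmeas hwiid hwindep σ2 hwmean hwvar z0 hz0meas hz0L2 a2 δ hδ r2 hr2meas hr2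
    hindep a1 μ ha1 hr1 δ0 hδ0 z hzinit hz
end

section
/- There exist constants c_2, c_3 > 0 and a time T such that for all t ≥ T the second moments of the process satisfy the recursive inequality E(z_{t+1}²) ≤ (1 − c_2/(t+1)^μ) E(z_t²) + c_3/(t+1)^{μ + δ_0}. -/
open MeasureTheory ProbabilityTheory Filter

/-!
Write `r_t = a₁ (t+1)^(-μ)` and `b_t = a₂ (t+1)^(-δ)`. By induction on `t`, the initial data
`(z₀, r₂)` together with the state `z_t` are independent of the future noise
`(w_t, w_{t+1}, …)`; hence `X_t = (1 - r_t) z_t + r_t r₂(t)` is independent of `w_t` and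
`E z_{t+1}² = E X_t² + r_t² σ²`. Bounding the cross term by `2 z r₂(t) ≤ b_t (1 + z²)` gives
`E X_t² ≤ (1 - r_t + r_t b_t) E z_t² + r_t b_t + r_t² b_t²`, which for `b_t ≤ 1/2` is the claim
with `c₂ = a₁/2`, because `r_t b_t` and `r_t²` are `O((t+1)^(-(μ+δ₀)))`.

If `w₀` is not square integrable, independence forces `E z_{t+1}² = ∞` for every `t`; Lean's
integral is then `0` and the inequality is trivial.
-/

theorem sq_convex_comb_le {r b z ρ : ℝ} (hr0 : 0 ≤ r) (hr1 : r ≤ 1) (hρ : |ρ| ≤ b) :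
    ((1 - r) * z + r * ρ) ^ 2 ≤ (1 - r + r * b) * z ^ 2 + r * b + r ^ 2 * b ^ 2 := by
  have hb : 0 ≤ b := (abs_nonneg ρ).trans hρ
  have hcross : 2 * z * ρ ≤ b * (1 + z ^ 2) := by
    nlinarith [abs_mul_abs_self z, abs_mul z ρ, le_abs_self (z * ρ), sq_nonneg (|z| - 1),
      mul_le_mul_of_nonneg_left hρ (abs_nonneg z), abs_nonneg z]
  have hρ2 : ρ ^ 2 ≤ b ^ 2 := sq_le_sq' (abs_le.mp hρ).1 (abs_le.mp hρ).2
  have hr : 0 ≤ r * (1 - r) := mul_nonneg hr0 (sub_nonneg.mpr hr1)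
  nlinarith [mul_le_mul_of_nonneg_left hcross hr, mul_le_mul_of_nonneg_left hρ2 (sq_nonneg r),
    mul_nonneg hr (sq_nonneg z), mul_nonneg (mul_nonneg (sq_nonneg r) hb) (sq_nonneg z),
    mul_nonneg (sq_nonneg r) hb]

theorem rpow_neg_mul_rpow_neg_le {p x y c : ℝ} (hp : 1 ≤ p) (h : c ≤ x + y) :
    p ^ (-x) * p ^ (-y) ≤ p ^ (-c) := by
  rw [← Real.rpow_add (by linarith)]
  exact Real.rpow_le_rpow_of_exponent_le hp (by linarith)

theorem gain_error_terms_le {a₁ a₂ σ2 μ δ δ₀ p r b : ℝ} (hp : 1 ≤ p) (ha₁ : 0 ≤ a₁)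
    (ha₂ : 0 ≤ a₂) (hσ2 : 0 ≤ σ2) (hδ : 0 ≤ δ) (hδ₀μ : δ₀ ≤ μ) (hδ₀δ : δ₀ ≤ δ)
    (hr0 : 0 ≤ r) (hr : r ≤ a₁ * p ^ (-μ)) (hb0 : 0 ≤ b) (hb : b ≤ a₂ * p ^ (-δ)) :
    r * b + r ^ 2 * (b ^ 2 + σ2) ≤ (a₁ * a₂ + a₁ ^ 2 * (a₂ ^ 2 + σ2)) * p ^ (-(μ + δ₀)) := by
  have hba : b ≤ a₂ :=
    hb.trans (mul_le_of_le_one_right ha₂ (Real.rpow_le_one_of_one_le_of_nonpos hp (by linarith)))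
  calc r * b + r ^ 2 * (b ^ 2 + σ2)
      ≤ a₁ * p ^ (-μ) * (a₂ * p ^ (-δ)) + (a₁ * p ^ (-μ)) ^ 2 * (a₂ ^ 2 + σ2) := by
        gcongr
    _ = a₁ * a₂ * (p ^ (-μ) * p ^ (-δ)) + a₁ ^ 2 * (a₂ ^ 2 + σ2) * (p ^ (-μ) * p ^ (-μ)) := by
        ring
    _ ≤ a₁ * a₂ * p ^ (-(μ + δ₀)) + a₁ ^ 2 * (a₂ ^ 2 + σ2) * p ^ (-(μ + δ₀)) := by
        gcongr <;> exact rpow_neg_mul_rpow_neg_le hp (by linarith)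
    _ = (a₁ * a₂ + a₁ ^ 2 * (a₂ ^ 2 + σ2)) * p ^ (-(μ + δ₀)) := by ring

theorem eventually_mul_rpow_neg_le (a : ℝ) {δ ε : ℝ} (hδ : 0 < δ) (hε : 0 < ε) :
    ∀ᶠ t : ℕ in atTop, a * ((t : ℝ) + 1) ^ (-δ) ≤ ε := by
  have hlim : Tendsto (fun t : ℕ => a * ((t : ℝ) + 1) ^ (-δ)) atTop (nhds 0) := by
    simpa using ((tendsto_rpow_neg_atTop hδ).comp
      (tendsto_atTop_add_const_right _ 1 tendsto_natCast_atTop_atTop)).const_mul a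
  exact hlim.eventually (eventually_le_nhds hε)

theorem integral_sq_convex_comb_le {Ω : Type*} [MeasurableSpace Ω] {P : Measure Ω}
    [IsProbabilityMeasure P] {Z R : Ω → ℝ} {r b : ℝ} (hr0 : 0 ≤ r) (hr1 : r ≤ 1)
    (hZ : MemLp Z 2 P) (hR : ∀ᵐ ω ∂P, |R ω| ≤ b) :
    ∫ ω, ((1 - r) * Z ω + r * R ω) ^ 2 ∂P
      ≤ (1 - r + r * b) * ∫ ω, Z ω ^ 2 ∂P + r * b + r ^ 2 * b ^ 2 := by
  have hbound : Integrable (fun ω => (1 - r + r * b) * Z ω ^ 2 + (r * b + r ^ 2 * b ^ 2)) P :=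
    (hZ.integrable_sq.const_mul _).add (integrable_const _)
  calc ∫ ω, ((1 - r) * Z ω + r * R ω) ^ 2 ∂P
      ≤ ∫ ω, (1 - r + r * b) * Z ω ^ 2 + (r * b + r ^ 2 * b ^ 2) ∂P :=
        integral_mono_of_nonneg (ae_of_all _ fun ω => sq_nonneg _) hbound
          (hR.mono fun ω hω => by simpa only [add_assoc] using sq_convex_comb_le hr0 hr1 hω)
    _ = (1 - r + r * b) * ∫ ω, Z ω ^ 2 ∂P + r * b + r ^ 2 * b ^ 2 := by
        rw [integral_add (hZ.integrable_sq.const_mul _) (integrable_const _), integral_const_mul,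
          integral_const, probReal_univ, one_smul, add_assoc]

namespace ProbabilityTheory

variable {Ω α β γ : Type*} [MeasurableSpace Ω] [MeasurableSpace α] [MeasurableSpace β]
  [MeasurableSpace γ] {P : Measure Ω}

theorem IndepFun.prodMk_left_of_indepFun_prodMk [IsProbabilityMeasure P] {X : Ω → α}
    {Y : Ω → β} {Z : Ω → γ} (hX : Measurable X) (hY : Measurable Y) (hZ : Measurable Z)
    (hXYZ : IndepFun X (fun ω => (Y ω, Z ω)) P) (hYZ : IndepFun Y Z P) :
    IndepFun (fun ω => (X ω, Y ω)) Z P := by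
  have hlaw : P.map (fun ω => ((X ω, Y ω), Z ω))
      = ((P.map X).prod (P.map Y)).prod (P.map Z) := by
    have hcomp : (fun ω => ((X ω, Y ω), Z ω))
        = MeasurableEquiv.prodAssoc.symm ∘ fun ω => (X ω, (Y ω, Z ω)) := rfl
    rw [hcomp, ← Measure.map_map MeasurableEquiv.prodAssoc.symm.measurable
      (hX.prodMk (hY.prodMk hZ)), hXYZ.map_prod_eq_prod_map_map hX.aemeasurable
      (hY.prodMk hZ).aemeasurable, hYZ.map_prod_eq_prod_map_map hY.aemeasurable hZ.aemeasurable,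
      ← Measure.prodAssoc_prod, MeasurableEquiv.map_symm_map]
  have hXY : P.map (fun ω => (X ω, Y ω)) = (P.map X).prod (P.map Y) := by
    have hcomp : (fun ω => (X ω, Y ω)) = Prod.fst ∘ fun ω => ((X ω, Y ω), Z ω) := rfl
    rw [hcomp, ← Measure.map_map measurable_fst ((hX.prodMk hY).prodMk hZ), hlaw,
      Measure.map_fst_prod, Measure.map_apply hZ MeasurableSet.univ, Set.preimage_univ,
      measure_univ, one_smul]
  rw [indepFun_iff_map_prod_eq_prod_map_map (hX.prodMk hY).aemeasurable hZ.aemeasurable, hlaw, hXY]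

theorem IndepFun.memLp_two_right_of_add_s8 [IsProbabilityMeasure P] {X Y : Ω → ℝ}
    (hX : Measurable X) (hY : Measurable Y) (hXY : IndepFun X Y P)
    (h : MemLp (fun ω => X ω + Y ω) 2 P) : MemLp Y 2 P := by
  -- Fubini on the product law: `x + Y` is square integrable for almost every value `x` of `X`.
  have hprod : Integrable (fun v : ℝ × ℝ => (v.1 + v.2) ^ 2) ((P.map X).prod (P.map Y)) := by
    rw [← hXY.map_prod_eq_prod_map_map hX.aemeasurable hY.aemeasurable,
      integrable_map_measure (by fun_prop) (hX.prodMk hY).aemeasurable]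
    exact h.integrable_sq
  have := Measure.isProbabilityMeasure_map (μ := P) hX.aemeasurable
  obtain ⟨x, hx⟩ := hprod.prod_right_ae.exists
  have hshift : MemLp (fun y => x + y) 2 (P.map Y) :=
    (memLp_two_iff_integrable_sq (by fun_prop)).mpr hx
  have hid : MemLp id 2 (P.map Y) := by
    convert hshift.sub (memLp_const x) using 1
    funext y
    simp
  exact (memLp_map_measure_iff (by fun_prop) hY.aemeasurable).mp hid

theorem iIndepFun.indepFun_tail {f : ℕ → Ω → β} (hf : iIndepFun f P)
    (hmeas : ∀ i, Measurable (f i)) (n : ℕ) :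
    IndepFun (f n) (fun ω k => f (n + 1 + k) ω) P := by
  have h := indep_iSup_of_disjoint (fun i => (hmeas i).comap_le) hf.iIndep
    (S := {n}) (T := Set.Ioi n) (by simp)
  rw [IndepFun_iff_Indep]
  refine indep_of_indep_of_le_right (indep_of_indep_of_le_left h (le_iSup₂_of_le n rfl le_rfl)) ?_
  simp_rw [MeasurableSpace.pi, MeasurableSpace.comap_iSup, MeasurableSpace.comap_comp,
    Function.comp_def, iSup_le_iff]
  exact fun k => le_iSup₂_of_le (f := fun i (_ : i ∈ Set.Ioi n) => MeasurableSpace.comap (f i) _)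
    (n + 1 + k) (by simp; omega) le_rfl

theorem IndepFun.integral_add_const_mul_sq {X Y : Ω → ℝ} (hXY : IndepFun X Y P)
    (hX : MemLp X 2 P) (hY : MemLp Y 2 P) (hY0 : ∫ ω, Y ω ∂P = 0) (c : ℝ) :
    ∫ ω, (X ω + c * Y ω) ^ 2 ∂P = ∫ ω, X ω ^ 2 ∂P + c ^ 2 * ∫ ω, Y ω ^ 2 ∂P := by
  have hcross : ∫ ω, X ω * Y ω ∂P = 0 := by
    rw [hXY.integral_fun_mul_eq_mul_integral hX.1 hY.1, hY0, mul_zero]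
  have h2c : Integrable (fun ω => 2 * c * (X ω * Y ω)) P := (hX.integrable_mul hY).const_mul _
  calc ∫ ω, (X ω + c * Y ω) ^ 2 ∂P
      = ∫ ω, (X ω ^ 2 + 2 * c * (X ω * Y ω)) + c ^ 2 * Y ω ^ 2 ∂P := by
        congr 1; funext ω; ring
    _ = ∫ ω, X ω ^ 2 ∂P + c ^ 2 * ∫ ω, Y ω ^ 2 ∂P := by
        rw [integral_add (f := fun ω => X ω ^ 2 + 2 * c * (X ω * Y ω))
            (hX.integrable_sq.add h2c) (hY.integrable_sq.const_mul _),
          integral_add hX.integrable_sq h2c, integral_const_mul, integral_const_mul, hcross]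
        ring

end ProbabilityTheory

def IsStochasticApproximation {Ω : Type*} (γ : ℕ → ℝ) (z r₂ w : ℕ → Ω → ℝ) : Prop :=
  ∀ t ω, z (t + 1) ω = (1 - γ t) * z t ω + γ t * (r₂ t ω + w t ω)

namespace IsStochasticApproximation

variable {Ω : Type*} {γ : ℕ → ℝ} {z r₂ w : ℕ → Ω → ℝ}

theorem eq_add_mul (hz : IsStochasticApproximation γ z r₂ w) (t : ℕ) :
    z (t + 1) = fun ω => ((1 - γ t) * z t ω + γ t * r₂ t ω) + γ t * w t ω := by
  funext ω; rw [hz]; ring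

variable [MeasurableSpace Ω] {P : Measure Ω}

theorem measurable (hz : IsStochasticApproximation γ z r₂ w) (hz0 : Measurable (z 0))
    (hr₂ : ∀ t, Measurable (r₂ t)) (hw : ∀ t, Measurable (w t)) : ∀ t, Measurable (z t)
  | 0 => hz0
  | t + 1 => by
    rw [hz.eq_add_mul]
    have := hz.measurable hz0 hr₂ hw t
    fun_prop

theorem memLp_two (hz : IsStochasticApproximation γ z r₂ w) (hz0 : MemLp (z 0) 2 P)
    (hr₂ : ∀ t, MemLp (r₂ t) 2 P) (hw : ∀ t, MemLp (w t) 2 P) : ∀ t, MemLp (z t) 2 P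
  | 0 => hz0
  | t + 1 => by
    rw [hz.eq_add_mul]
    exact (((hz.memLp_two hz0 hr₂ hw t).const_mul _).add ((hr₂ t).const_mul _)).add
      ((hw t).const_mul _)

theorem indepFun_future_noise [IsProbabilityMeasure P] (hz : IsStochasticApproximation γ z r₂ w)
    (hz0 : Measurable (z 0)) (hr₂ : ∀ t, Measurable (r₂ t)) (hw : ∀ t, Measurable (w t))
    (hw_indep : iIndepFun w P)
    (hindep : IndepFun (fun ω => (z 0 ω, fun t => r₂ t ω)) (fun ω t => w t ω) P) :
    ∀ t, IndepFun (fun ω => ((z 0 ω, fun s => r₂ s ω), z t ω)) (fun ω k => w (t + k) ω) P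
  | 0 => by
    convert hindep.comp (φ := fun v => (v, v.1)) (by fun_prop) measurable_id using 1 <;>
      funext ω <;> simp
  | t + 1 => by
    have hV : Measurable fun ω => (z 0 ω, fun s => r₂ s ω) :=
      hz0.prodMk (measurable_pi_lambda _ hr₂)
    have hnow : IndepFun (fun ω => ((z 0 ω, fun s => r₂ s ω), z t ω))
        (fun ω => (w t ω, fun k => w (t + 1 + k) ω)) P := by
      convert (hz.indepFun_future_noise hz0 hr₂ hw hw_indep hindep t).comp
        (ψ := fun u : ℕ → ℝ => (u 0, fun k => u (1 + k))) measurable_id (by fun_prop) using 1 <;>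
        funext ω <;> simp [add_assoc]
    have hstep := hnow.prodMk_left_of_indepFun_prodMk
      (hV.prodMk (hz.measurable hz0 hr₂ hw t)) (hw t)
      (measurable_pi_lambda _ fun k => hw _) (hw_indep.indepFun_tail hw t)
    convert hstep.comp (φ := fun x => (x.1.1, (1 - γ t) * x.1.2 + γ t * (x.1.1.2 t + x.2)))
      (by fun_prop) measurable_id using 1 <;> funext ω <;> simp [hz t ω]

theorem indepFun_noise [IsProbabilityMeasure P] (hz : IsStochasticApproximation γ z r₂ w)
    (hz0 : Measurable (z 0)) (hr₂ : ∀ t, Measurable (r₂ t)) (hw : ∀ t, Measurable (w t))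
    (hw_indep : iIndepFun w P)
    (hindep : IndepFun (fun ω => (z 0 ω, fun t => r₂ t ω)) (fun ω t => w t ω) P) (t : ℕ) :
    IndepFun (fun ω => (1 - γ t) * z t ω + γ t * r₂ t ω) (w t) P :=
  (hz.indepFun_future_noise hz0 hr₂ hw hw_indep hindep t).comp
    (φ := fun x : (ℝ × (ℕ → ℝ)) × ℝ => (1 - γ t) * x.2 + γ t * x.1.2 t)
    (ψ := fun u : ℕ → ℝ => u 0) (by fun_prop) (by fun_prop)

theorem integral_sq_succ_le [IsProbabilityMeasure P] (hz : IsStochasticApproximation γ z r₂ w)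
    {t : ℕ} {b : ℝ} (hγ0 : 0 ≤ γ t) (hγ1 : γ t ≤ 1) (hb : b ≤ 1 / 2)
    (hr₂ : ∀ᵐ ω ∂P, |r₂ t ω| ≤ b) (hzt : MemLp (z t) 2 P) (hr₂t : MemLp (r₂ t) 2 P)
    (hwt : MemLp (w t) 2 P) (hw0 : ∫ ω, w t ω ∂P = 0)
    (hind : IndepFun (fun ω => (1 - γ t) * z t ω + γ t * r₂ t ω) (w t) P) :
    ∫ ω, z (t + 1) ω ^ 2 ∂P
      ≤ (1 - γ t / 2) * ∫ ω, z t ω ^ 2 ∂P + γ t * b + γ t ^ 2 * (b ^ 2 + ∫ ω, w t ω ^ 2 ∂P) := by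
  have hA : 0 ≤ ∫ ω, z t ω ^ 2 ∂P := integral_nonneg fun ω => sq_nonneg _
  have hX := integral_sq_convex_comb_le hγ0 hγ1 hzt hr₂
  rw [hz.eq_add_mul,
    hind.integral_add_const_mul_sq ((hzt.const_mul _).add (hr₂t.const_mul _)) hwt hw0]
  nlinarith [mul_le_mul_of_nonneg_right (mul_le_mul_of_nonneg_left hb hγ0) hA]

theorem not_integrable_sq_succ [IsProbabilityMeasure P] (hz : IsStochasticApproximation γ z r₂ w)
    (hzm : ∀ t, Measurable (z t)) (hr₂ : ∀ t, Measurable (r₂ t)) (hw : ∀ t, Measurable (w t))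
    {t : ℕ} (hγ : γ t ≠ 0) (hwt : ¬ MemLp (w t) 2 P)
    (hind : IndepFun (fun ω => (1 - γ t) * z t ω + γ t * r₂ t ω) (w t) P) :
    ¬ Integrable (fun ω => z (t + 1) ω ^ 2) P := by
  intro hint
  have hsum := (memLp_two_iff_integrable_sq (hzm (t + 1)).aestronglyMeasurable).mpr hint
  rw [hz.eq_add_mul] at hsum
  have hγw := (hind.comp measurable_id (measurable_const_mul (γ t))).memLp_two_right_of_add_s8
    (((hzm t).const_mul _).add ((hr₂ t).const_mul _)) ((hw t).const_mul _) hsum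
  exact hwt (by simpa [← mul_assoc, hγ] using hγw.const_mul (γ t)⁻¹)

end IsStochasticApproximation

/-- There exist constants `c2, c3 > 0` and a time `T` such that for all `t ≥ T`
the second moments satisfy
`E(z_{t+1}²) ≤ (1 − c2/(t+1)^μ) E(z_t²) + c3/(t+1)^{μ+δ0}`. -/
theorem stmt_8 {Ω : Type} [MeasurableSpace Ω] (P : Measure Ω) [IsProbabilityMeasure P]
    -- i.i.d. noise, mean zero, variance σ² < ∞
    (w : ℕ → Ω → ℝ) (hwmeas : ∀ t, Measurable (w t))
    (hwiid : ∀ t, IdentDistrib (w t) (w 0) P P)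
    (hwindep : iIndepFun w P)
    (σ2 : ℝ) (hwmean : ∀ t, ∫ ω, w t ω ∂P = 0)
    (hwvar : ∀ t, ∫ ω, (w t ω) ^ 2 ∂P = σ2)
    -- square-integrable initial condition
    (z0 : Ω → ℝ) (hz0meas : Measurable z0)
    (hz0L2 : Integrable (fun ω => (z0 ω) ^ 2) P)
    -- a.s. bounded perturbations
    (a2 δ : ℝ) (ha2 : 0 < a2) (hδ : 0 < δ)
    (r2 : ℕ → Ω → ℝ) (hr2meas : ∀ t, Measurable (r2 t))
    (hr2 : ∀ t, ∀ᵐ ω ∂P, |r2 t ω| ≤ a2 * ((t : ℝ) + 1) ^ (-δ))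
    -- (z0, r2) independent of the noise sequence
    (hindep : IndepFun (fun ω => (z0 ω, fun t => r2 t ω)) (fun ω t => w t ω) P)
    -- deterministic gains
    (a1 μ : ℝ) (ha1 : 0 < a1) (hr1 : ∀ t : ℕ, a1 * ((t : ℝ) + 1) ^ (-μ) ≤ 1)
    -- exponents
    (δ0 : ℝ)
    (hδ0 : (1 ≤ δ ∧ 0 < δ0 ∧ δ0 < 1 ∧ μ = δ0) ∨ (δ < 1 ∧ δ0 = δ ∧ δ ≤ μ ∧ μ < 1))
    -- the process
    (z : ℕ → Ω → ℝ) (hzinit : z 0 = z0)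
    (hz : ∀ t ω, z (t + 1) ω = (1 - a1 * ((t : ℝ) + 1) ^ (-μ)) * z t ω
        + a1 * ((t : ℝ) + 1) ^ (-μ) * (r2 t ω + w t ω)) :
    ∃ c2 c3 : ℝ, 0 < c2 ∧ 0 < c3 ∧ ∃ T : ℕ, ∀ t ≥ T,
      (∫ ω, (z (t + 1) ω) ^ 2 ∂P) ≤
        (1 - c2 / ((t : ℝ) + 1) ^ μ) * (∫ ω, (z t ω) ^ 2 ∂P)
          + c3 / ((t : ℝ) + 1) ^ (μ + δ0) := by
  obtain ⟨hδ0μ, hδ0δ⟩ : δ0 ≤ μ ∧ δ0 ≤ δ := by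
    rcases hδ0 with ⟨h1, -, h3, rfl⟩ | ⟨-, rfl, h, -⟩ <;> constructor <;> linarith
  subst hzinit
  set γ : ℕ → ℝ := fun t => a1 * ((t : ℝ) + 1) ^ (-μ)
  have hsa : IsStochasticApproximation γ z r2 w := hz
  have hind := hsa.indepFun_noise hz0meas hr2meas hwmeas hwindep hindep
  have hσ2 : 0 ≤ σ2 := hwvar 0 ▸ integral_nonneg fun ω => sq_nonneg _
  obtain ⟨T, hT⟩ := eventually_atTop.mp (eventually_mul_rpow_neg_le a2 hδ one_half_pos)
  refine ⟨a1 / 2, a1 * a2 + a1 ^ 2 * (a2 ^ 2 + σ2), by positivity, by positivity, T,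
    fun t ht => ?_⟩
  set p : ℝ := (t : ℝ) + 1
  have hp : 1 ≤ p := by linarith [t.cast_nonneg (α := ℝ)]
  have hγ0 : 0 < γ t := by positivity
  have hA : 0 ≤ ∫ ω, z t ω ^ 2 ∂P := integral_nonneg fun ω => sq_nonneg _
  rw [show a1 / 2 / p ^ μ = γ t / 2 by
      rw [show γ t = a1 * p ^ (-μ) from rfl, Real.rpow_neg (by linarith)]; ring,
    div_eq_mul_inv _ (p ^ (μ + δ0)), ← Real.rpow_neg (by linarith)]
  by_cases hw2 : MemLp (w 0) 2 P
  · have hwL2 (s : ℕ) : MemLp (w s) 2 P := (hwiid s).memLp_iff.mpr hw2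
    have hr2L2 (s : ℕ) : MemLp (r2 s) 2 P := MemLp.of_bound (hr2meas s).aestronglyMeasurable _
      ((hr2 s).mono fun ω h => by rwa [Real.norm_eq_abs])
    have hzL2 := hsa.memLp_two
      ((memLp_two_iff_integrable_sq hz0meas.aestronglyMeasurable).mpr hz0L2) hr2L2 hwL2
    have hstep := hsa.integral_sq_succ_le hγ0.le (hr1 t) (hT t ht) (hr2 t) (hzL2 t) (hr2L2 t)
      (hwL2 t) (hwmean t) (hind t)
    have herr := gain_error_terms_le (b := a2 * p ^ (-δ)) hp ha1.le ha2.le hσ2 hδ.le hδ0μ hδ0δ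
      hγ0.le le_rfl (by positivity) le_rfl
    rw [hwvar t] at hstep
    linarith
  · rw [integral_undef (hsa.not_integrable_sq_succ (hsa.measurable hz0meas hr2meas hwmeas)
      hr2meas hwmeas hγ0.ne' (fun h => hw2 ((hwiid t).memLp_iff.mp h)) (hind t))]
    exact add_nonneg (mul_nonneg (by linarith [hr1 t]) hA) (by positivity)
end

section
/- Let 0 < μ < 1, ε_0 > 0, 0 < c_5 < 1 and c_6 > 0. Then the deterministic double sequence S(t) = Σ_{i=0}^{t−1} [ Π_{j=i+1}^{t−1} (1 − c_5/(j+1)^μ) ] · c_6/(i+1)^{μ + ε_0} satisfies lim_{t→∞} S(t) = 0 (with the empty product for i = t−1 equal to 1). -/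
/-!
With `a j = c5 / (j + 1) ^ μ` the summand factors as `w t i * r i`, where
`w t i = (∏_{i < j < t} (1 - a j)) * a i` and `r i = (c6 / c5) (i + 1) ^ (-ε0) → 0`.
The weights telescope, `∑_{i < t} w t i = 1 - ∏_{j < t} (1 - a j) ≤ 1`, and each column
`w · i` tends to `0` because `∑ a j` diverges (`μ ≤ 1`) and `1 - x ≤ exp (-x)`.
A Toeplitz averaging argument then carries `r i → 0` over to the weighted sums.
-/

open Filter Finset Topology

theorem sum_range_prod_Ico_one_sub_mul {R : Type*} [CommRing R] (a : ℕ → R) (t : ℕ) :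
    ∑ i ∈ range t, (∏ j ∈ Ico (i + 1) t, (1 - a j)) * a i = 1 - ∏ j ∈ range t, (1 - a j) := by
  induction t with
  | zero => simp
  | succ t ih =>
    have hshift : ∀ i ∈ range t, (∏ j ∈ Ico (i + 1) (t + 1), (1 - a j)) * a i
        = (∏ j ∈ Ico (i + 1) t, (1 - a j)) * a i * (1 - a t) := fun i hi => by
      rw [prod_Ico_succ_top (mem_range.mp hi)]
      ring
    rw [sum_range_succ, sum_congr rfl hshift, ← sum_mul, ih, prod_range_succ, Ico_self,
      prod_empty]
    ring

theorem tendsto_sum_range_mul_of_tendsto_zero {w : ℕ → ℕ → ℝ} {r : ℕ → ℝ} {C : ℝ}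
    (hw : ∀ t i, 0 ≤ w t i) (hC : ∀ t, ∑ i ∈ range t, w t i ≤ C)
    (hw0 : ∀ i, Tendsto (fun t => w t i) atTop (𝓝 0)) (hr : Tendsto r atTop (𝓝 0)) :
    Tendsto (fun t => ∑ i ∈ range t, w t i * r i) atTop (𝓝 0) := by
  have hC0 : 0 ≤ C := by simpa using hC 0
  rw [Metric.tendsto_nhds]
  intro ε hε
  set δ := ε / (2 * (C + 1)) with hδ
  have hδ0 : 0 < δ := by positivity
  have hCδ : C * δ < ε / 2 := by
    rw [hδ, mul_div_assoc', div_lt_div_iff₀ (by positivity) two_pos]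
    nlinarith
  obtain ⟨m, hm⟩ := eventually_atTop.mp (Metric.tendsto_nhds.mp hr δ hδ0)
  have hhead : Tendsto (fun t => ∑ i ∈ range m, w t i * r i) atTop (𝓝 0) := by
    simpa using tendsto_finsetSum (range m) fun i _ => (hw0 i).mul_const (r i)
  filter_upwards [Metric.tendsto_nhds.mp hhead (ε / 2) (half_pos hε), eventually_ge_atTop m]
    with t hhead hmt
  have htail : |∑ i ∈ Ico m t, w t i * r i| ≤ C * δ :=
    calc |∑ i ∈ Ico m t, w t i * r i| ≤ ∑ i ∈ Ico m t, w t i * δ := by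
          refine (abs_sum_le_sum_abs _ _).trans (sum_le_sum fun i hi => ?_)
          rw [abs_mul, abs_of_nonneg (hw t i)]
          have hri := hm i (mem_Ico.mp hi).1
          rw [Real.dist_eq, sub_zero] at hri
          exact mul_le_mul_of_nonneg_left hri.le (hw t i)
      _ ≤ ∑ i ∈ range t, w t i * δ :=
          sum_le_sum_of_subset_of_nonneg (fun i hi => mem_range.mpr (mem_Ico.mp hi).2)
            fun i _ _ => mul_nonneg (hw t i) hδ0.le
      _ ≤ C * δ := by rw [← sum_mul]; exact mul_le_mul_of_nonneg_right (hC t) hδ0.le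
  rw [Real.dist_eq, sub_zero] at hhead ⊢
  rw [← sum_range_add_sum_Ico _ hmt]
  calc _ ≤ |∑ i ∈ range m, w t i * r i| + |∑ i ∈ Ico m t, w t i * r i| := abs_add_le _ _
    _ < ε := by linarith

theorem tendsto_prod_Ico_one_sub_of_not_summable {a : ℕ → ℝ} (ha0 : ∀ j, 0 ≤ a j)
    (ha1 : ∀ j, a j ≤ 1) (ha : ¬Summable a) (k : ℕ) :
    Tendsto (fun t => ∏ j ∈ Ico k t, (1 - a j)) atTop (𝓝 0) := by
  have hsum : Tendsto (fun t => ∑ j ∈ Ico k t, a j) atTop atTop := by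
    refine (((not_summable_iff_tendsto_nat_atTop_of_nonneg ha0).mp ha).atTop_add
      (tendsto_const_nhds (x := -∑ j ∈ range k, a j))).congr' ?_
    filter_upwards [eventually_ge_atTop k] with t hkt
    rw [sum_Ico_eq_sub _ hkt, sub_eq_add_neg]
  have hexp : ∀ t, ∏ j ∈ Ico k t, (1 - a j) ≤ Real.exp (-∑ j ∈ Ico k t, a j) := fun t =>
    calc ∏ j ∈ Ico k t, (1 - a j) ≤ ∏ j ∈ Ico k t, Real.exp (-a j) :=
          prod_le_prod (fun j _ => sub_nonneg.mpr (ha1 j)) fun j _ => Real.one_sub_le_exp_neg _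
      _ = Real.exp (-∑ j ∈ Ico k t, a j) := by rw [← sum_neg_distrib, Real.exp_sum]
  exact squeeze_zero (fun t => prod_nonneg fun j _ => sub_nonneg.mpr (ha1 j)) hexp
    (Real.tendsto_exp_atBot.comp (tendsto_neg_atTop_atBot.comp hsum))

theorem tendsto_sum_range_prod_Ico_one_sub_mul_mul {a r : ℕ → ℝ} (ha0 : ∀ j, 0 ≤ a j)
    (ha1 : ∀ j, a j ≤ 1) (ha : ¬Summable a) (hr : Tendsto r atTop (𝓝 0)) :
    Tendsto (fun t => ∑ i ∈ range t, (∏ j ∈ Ico (i + 1) t, (1 - a j)) * a i * r i)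
      atTop (𝓝 0) := by
  have hprod : ∀ k t, 0 ≤ ∏ j ∈ Ico k t, (1 - a j) := fun k t =>
    prod_nonneg fun j _ => sub_nonneg.mpr (ha1 j)
  have hcol : ∀ i, Tendsto (fun t => (∏ j ∈ Ico (i + 1) t, (1 - a j)) * a i) atTop (𝓝 0) :=
    fun i => by simpa using (tendsto_prod_Ico_one_sub_of_not_summable ha0 ha1 ha _).mul_const (a i)
  refine tendsto_sum_range_mul_of_tendsto_zero (C := 1)
    (fun t i => mul_nonneg (hprod (i + 1) t) (ha0 i)) (fun t => ?_) hcol hr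
  rw [sum_range_prod_Ico_one_sub_mul, sub_le_self_iff, ← Nat.Ico_zero_eq_range]
  exact hprod 0 t

theorem not_summable_div_nat_add_one_rpow {c μ : ℝ} (hc : c ≠ 0) (hμ : μ ≤ 1) :
    ¬Summable fun j : ℕ => c / ((j : ℝ) + 1) ^ μ := by
  simp only [← mul_one_div c, summable_mul_left_iff hc]
  intro hs
  have : 1 < μ := (Real.summable_one_div_nat_add_rpow 1 μ).mp
    (hs.congr fun j => by rw [abs_of_pos (by positivity)])
  linarith

theorem stmt_10_general (μ ε0 c5 c6 : ℝ) (hμ : 0 < μ) (hμ1 : μ < 1)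
    (hε0 : 0 < ε0) (hc5 : 0 < c5) (hc5' : c5 < 1) :
    Tendsto (fun t : ℕ =>
      ∑ i ∈ Finset.range t,
        (∏ j ∈ Finset.Ico (i + 1) t, (1 - c5 / ((j : ℝ) + 1) ^ μ)) *
          (c6 / ((i : ℝ) + 1) ^ (μ + ε0)))
      atTop (nhds 0) := by
  have hpow : ∀ j : ℕ, 1 ≤ ((j : ℝ) + 1) ^ μ := fun j =>
    Real.one_le_rpow (by linarith [j.cast_nonneg (α := ℝ)]) hμ.le
  have hr : Tendsto (fun i : ℕ => c6 / c5 * ((i : ℝ) + 1) ^ (-ε0)) atTop (𝓝 0) := by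
    simpa using ((tendsto_rpow_neg_atTop hε0).comp
      (tendsto_natCast_atTop_atTop.atTop_add tendsto_const_nhds)).const_mul (c6 / c5)
  refine (tendsto_sum_range_prod_Ico_one_sub_mul_mul (fun j => by positivity)
    (fun j => div_le_one_of_le₀ (hc5'.le.trans (hpow j)) (by positivity))
    (not_summable_div_nat_add_one_rpow hc5.ne' hμ1.le) hr).congr
    fun t => sum_congr rfl fun i _ => ?_
  have hi : (0 : ℝ) < (i : ℝ) + 1 := by positivity
  rw [mul_assoc, Real.rpow_add hi, Real.rpow_neg hi.le]
  field_simp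

/-- The deterministic double sequence
`S(t) = Σ_{i=0}^{t−1} [ Π_{j=i+1}^{t−1} (1 − c5/(j+1)^μ) ] · c6/(i+1)^{μ+ε0}`
tends to `0` as `t → ∞`. -/
theorem stmt_10 (μ ε0 c5 c6 : ℝ) (hμ : 0 < μ) (hμ1 : μ < 1)
    (hε0 : 0 < ε0) (hc5 : 0 < c5) (hc5' : c5 < 1) (hc6 : 0 < c6) :
    Tendsto (fun t : ℕ =>
      ∑ i ∈ Finset.range t,
        (∏ j ∈ Finset.Ico (i + 1) t, (1 - c5 / ((j : ℝ) + 1) ^ μ)) *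
          (c6 / ((i : ℝ) + 1) ^ (μ + ε0)))
      atTop (nhds 0) :=
  stmt_10_general μ ε0 c5 c6 hμ hμ1 hε0 hc5 hc5'
end
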